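/- Let g be the 6-dimensional nilpotent Lie algebra (0,0,12,13,23,14), i.e. de₁=de₂=0, de₃=e₁∧e₂, de₄=e₁∧e₃, de₅=e₂∧e₃, de₆=e₁∧e₄. The 2-form ω = e₁∧e₅ + e₂∧e₄ + e₃∧e₄ − e₂∧e₆ is closed and satisfies ω³ ≠ 0; i.e. g admits a symplectic form. -/

import Mathlib

/- STATEMENT 19: the 6-dimensional nilpotent Lie algebra `(0,0,12,13,23,14)`
admits the symplectic form `ω = e₁∧e₅ + e₂∧e₄ + e₃∧e₄ − e₂∧e₆`: it is closed and
`ω³ ≠ 0`.  Forms are modelled in `Λ•g*` with `g* = Fin 6 → ℝ`. -/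

noncomputable section

open ExteriorAlgebra

/-- The basis 1-forms `e₁,…,e₆` (0-indexed). -/
def e (i : Fin 6) : ExteriorAlgebra ℝ (Fin 6 → ℝ) := ι ℝ (Pi.single i 1)

/-- The values of `d` on the basis: `(0,0,12,13,23,14)` (0-indexed). -/
def D : Fin 6 → ExteriorAlgebra ℝ (Fin 6 → ℝ) :=
  ![0, 0, e 0 * e 1, e 0 * e 2, e 1 * e 2, e 0 * e 3]

/-- The 2-form `∑ k_{ij} e_i ∧ e_j` with coefficients `k`. -/
def twoForm (k : Fin 6 → Fin 6 → ℝ) : ExteriorAlgebra ℝ (Fin 6 → ℝ) :=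
  ∑ i, ∑ j, k i j • (e i * e j)

/-- `d` of the 2-form with coefficients `k` (derivation rule). -/
def dTwo (k : Fin 6 → Fin 6 → ℝ) : ExteriorAlgebra ℝ (Fin 6 → ℝ) :=
  ∑ i, ∑ j, k i j • (D i * e j - e i * D j)

/-- Coefficients of `ω = e₁∧e₅ + e₂∧e₄ + e₃∧e₄ − e₂∧e₆` (0-indexed). -/
def kω : Fin 6 → Fin 6 → ℝ := fun i j =>
  if i = 0 ∧ j = 4 then 1 else if i = 1 ∧ j = 3 then 1
    else if i = 2 ∧ j = 3 then 1 else if i = 1 ∧ j = 5 then -1 else 0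

/-!
`dω = 0` and `ω³ = 6 e₁∧⋯∧e₆` are finite computations: expanding by bilinearity and sorting every
monomial of 1-forms by anticommutation, the terms of `dω` cancel in pairs, and of the monomials of
`ω³` only the six orderings of `(e₁∧e₅)(e₃∧e₄)(e₂∧e₆)` survive. The top monomial `e₁∧⋯∧e₆` is
nonzero because the determinant, extended to `Λ•g*` by the universal property, takes the value 1 on it.
-/

namespace ExteriorAlgebra

theorem ιMulti_basis_ne_zero {R M : Type*} [CommRing R] [Nontrivial R] [AddCommGroup M]
    [Module R M] {n : ℕ} (b : Module.Basis (Fin n) R M) : ιMulti R n b ≠ 0 := by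
  intro h
  have hdet := congrArg (liftAlternating (Pi.single (M := fun i => M [⋀^Fin i]→ₗ[R] R) n b.det)) h
  rw [liftAlternating_apply_ιMulti, Pi.single_eq_same, b.det_self, map_zero] at hdet
  exact one_ne_zero hdet

end ExteriorAlgebra

lemma e_mul_self (i : Fin 6) : e i * e i = 0 := ι_sq_zero _

lemma e_mul_e_mul_self (i : Fin 6) (x : ExteriorAlgebra ℝ (Fin 6 → ℝ)) :
    e i * (e i * x) = 0 := by
  rw [← mul_assoc, e_mul_self, zero_mul]

-- Stated for `j < i` only, so that as a `simp` lemma it sorts each monomial increasingly.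
lemma e_mul_e_of_lt {i j : Fin 6} (_ : j < i) : e i * e j = -(e j * e i) :=
  eq_neg_of_add_eq_zero_left (ι_add_mul_swap _ _)

lemma e_mul_e_mul_of_lt {i j : Fin 6} (h : j < i) (x : ExteriorAlgebra ℝ (Fin 6 → ℝ)) :
    e i * (e j * x) = -(e j * (e i * x)) := by
  rw [← mul_assoc, e_mul_e_of_lt h, neg_mul, mul_assoc]

lemma twoForm_kω : twoForm kω = e 0 * e 4 + e 1 * e 3 + e 2 * e 3 - e 1 * e 5 := by
  simp only [twoForm, kω, Fin.sum_univ_six, Fin.reduceEq, and_true, and_false, ite_true, ite_false,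
    one_smul, neg_smul, zero_smul, add_zero, zero_add]
  abel

lemma dTwo_kω_eq_zero : dTwo kω = 0 := by
  simp only [dTwo, D, kω, Fin.sum_univ_six, Fin.reduceEq, and_true, and_false, ite_true, ite_false,
    Matrix.cons_val, one_smul, neg_smul, zero_smul, add_zero, zero_add]
  simp only [mul_assoc, e_mul_e_mul_of_lt, e_mul_self, Fin.reduceLT, zero_mul, mul_zero, sub_zero,
    zero_sub, sub_neg_eq_add, neg_zero, zero_add]
  abel

lemma ιMulti_basisFun_six :
    ιMulti ℝ 6 (Pi.basisFun ℝ (Fin 6)) = e 0 * (e 1 * (e 2 * (e 3 * (e 4 * e 5)))) := by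
  simp [ιMulti_apply, e, Matrix.vecTail]

lemma twoForm_kω_cube :
    twoForm kω * twoForm kω * twoForm kω = (6 : ℝ) • ιMulti ℝ 6 (Pi.basisFun ℝ (Fin 6)) := by
  rw [twoForm_kω, ιMulti_basisFun_six]
  simp only [mul_add, add_mul, mul_sub, sub_mul, mul_assoc, e_mul_e_of_lt, e_mul_e_mul_of_lt,
    e_mul_self, e_mul_e_mul_self, Fin.reduceLT, mul_zero, mul_neg, neg_mul, neg_neg, sub_zero,
    sub_neg_eq_add, neg_zero, zero_add, add_zero]
  module

/-- `ω` is closed and `ω³ ≠ 0`, i.e. `g` admits a symplectic form. -/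
theorem symplectic_0_0_12_13_23_14 :
    dTwo kω = 0 ∧ twoForm kω * twoForm kω * twoForm kω ≠ 0 := by
  refine ⟨dTwo_kω_eq_zero, ?_⟩
  rw [twoForm_kω_cube]
  exact smul_ne_zero (by norm_num) (ιMulti_basis_ne_zero _)

end
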